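/- Let X ∈ ℝ^{d_in×n}, σ: ℝ → ℝ applied entrywise, u ∈ ℝ^{d_in}, and suppose vᵀ := σ(uᵀX) is nonzero and vᵀ ∉ row(X). Let Y ∈ ℝ^{d_out×n} be a nonzero matrix each of whose rows lies in span{vᵀ}. Then for every r ≥ 1, E_σ(r) = 0 < E_id(r). -/

import Mathlib

/-!
With `A` having every row equal to `uᵀ`, every row of `σ(A X)` is `vᵀ`, so a matrix `Y` whose
rows are multiples of `vᵀ` is written exactly as `B σ(A X)`. On the other hand every row of
`B A X` lies in `row(X)`, a closed subspace; a nonzero row of `Y` is a nonzero multiple of `vᵀ`,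
hence outside `row(X)`, and its positive distance to `row(X)` bounds `‖Y - B A X‖_F` from below
uniformly in `A` and `B`.
-/

open scoped BigOperators

namespace CoLA

noncomputable section

/-- Frobenius norm of a real matrix. -/
def frobNorm {m n : ℕ} (M : Matrix (Fin m) (Fin n) ℝ) : ℝ :=
  Real.sqrt (∑ i, ∑ j, (M i j) ^ 2)

/-- Entrywise application of `σ` to a matrix. -/
def entrywise (σ : ℝ → ℝ) {m n : ℕ} (M : Matrix (Fin m) (Fin n) ℝ) :
    Matrix (Fin m) (Fin n) ℝ :=
  Matrix.of fun i j => σ (M i j)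

/-- `E_σ(r)`. -/
def Esig (σ : ℝ → ℝ) {din dout n : ℕ} (X : Matrix (Fin din) (Fin n) ℝ)
    (Y : Matrix (Fin dout) (Fin n) ℝ) (r : ℕ) : ℝ :=
  ⨅ (A : Matrix (Fin r) (Fin din) ℝ), ⨅ (B : Matrix (Fin dout) (Fin r) ℝ),
    frobNorm (Y - B * entrywise σ (A * X))

/-- `E_id(r)`. -/
def Eid {din dout n : ℕ} (X : Matrix (Fin din) (Fin n) ℝ)
    (Y : Matrix (Fin dout) (Fin n) ℝ) (r : ℕ) : ℝ :=
  ⨅ (A : Matrix (Fin r) (Fin din) ℝ), ⨅ (B : Matrix (Fin dout) (Fin r) ℝ),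
    frobNorm (Y - B * A * X)

/-- The (unsorted) singular values of `M`: square roots of eigenvalues of `Mᴴ * M`. -/
def svAux {m n : ℕ} (M : Matrix (Fin m) (Fin n) ℝ) : Fin n → ℝ :=
  fun i => Real.sqrt ((show (Matrix.transpose M * M).IsHermitian by
    simpa using Matrix.isHermitian_conjTranspose_mul_self M).eigenvalues i)

/-- Singular values of `M` sorted in non-increasing order (0-indexed). -/
def sv {m n : ℕ} (M : Matrix (Fin m) (Fin n) ℝ) : Fin n → ℝ :=
  fun i => svAux M (Tuple.sort (fun j => -(svAux M j)) i)

/-- `k`-th largest singular value (1-indexed, `0` for `k > n`). -/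
def sVal {m n : ℕ} (M : Matrix (Fin m) (Fin n) ℝ) (k : ℕ) : ℝ :=
  if h : k - 1 < n then sv M ⟨k - 1, h⟩ else 0

/-- `s_{>k}(M) = √(∑_{j>k} s_j(M)²)` (with `j` 1-indexed). -/
def sGt {m n : ℕ} (M : Matrix (Fin m) (Fin n) ℝ) (k : ℕ) : ℝ :=
  Real.sqrt (∑ j : Fin n, if k ≤ (j : ℕ) then (sv M j) ^ 2 else 0)

/-- Spectral (ℓ²-operator) norm of a real matrix. -/
def specNorm {m n : ℕ} (M : Matrix (Fin m) (Fin n) ℝ) : ℝ :=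
  ‖LinearMap.toContinuousLinearMap (Matrix.toEuclideanLin M)‖

/-- Effective rank `r_α(M)`: the least `k` with `∑_{i≤k} s_i² ≥ α ∑_i s_i²`. -/
def effRank {m n : ℕ} (M : Matrix (Fin m) (Fin n) ℝ) (α : ℝ) : ℕ :=
  sInf {k : ℕ |
    α * ∑ i : Fin n, (sv M i) ^ 2 ≤ ∑ i : Fin n, if (i : ℕ) < k then (sv M i) ^ 2 else 0}

/-- Row space of `X` inside `Fin n → ℝ`. -/
def rowSpace {d n : ℕ} (X : Matrix (Fin d) (Fin n) ℝ) : Submodule ℝ (Fin n → ℝ) :=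
  Submodule.span ℝ (Set.range X)

/-- Row space of `X` as a submodule of Euclidean space. -/
def rowSpaceE {d n : ℕ} (X : Matrix (Fin d) (Fin n) ℝ) :
    Submodule ℝ (EuclideanSpace ℝ (Fin n)) :=
  Submodule.span ℝ (Set.range fun i => (WithLp.equiv 2 (Fin n → ℝ)).symm (X i))

/-- Row-wise orthogonal projection of the rows of `Y` onto the subspace `S`. -/
def projRows {dout n : ℕ} (S : Submodule ℝ (EuclideanSpace ℝ (Fin n)))
    (Y : Matrix (Fin dout) (Fin n) ℝ) : Matrix (Fin dout) (Fin n) ℝ :=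
  Matrix.of fun i => WithLp.equiv 2 (Fin n → ℝ)
    ((Submodule.orthogonalProjectionOnto S ((WithLp.equiv 2 (Fin n → ℝ)).symm (Y i)) :
      EuclideanSpace ℝ (Fin n)))

/-- Row-wise orthogonal projection onto the orthogonal complement of `span{v}`. -/
def projVperp {dout n : ℕ} (v : Fin n → ℝ) (Y : Matrix (Fin dout) (Fin n) ℝ) :
    Matrix (Fin dout) (Fin n) ℝ :=
  projRows (Submodule.span ℝ {(WithLp.equiv 2 (Fin n → ℝ)).symm v})ᗮ Y

lemma frobNorm_nonneg {m n : ℕ} (M : Matrix (Fin m) (Fin n) ℝ) : 0 ≤ frobNorm M :=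
  Real.sqrt_nonneg _

lemma abs_apply_le_frobNorm {m n : ℕ} (M : Matrix (Fin m) (Fin n) ℝ) (i : Fin m) (j : Fin n) :
    |M i j| ≤ frobNorm M := by
  refine Real.abs_le_sqrt ?_
  calc M i j ^ 2 ≤ ∑ j', M i j' ^ 2 :=
        Finset.single_le_sum (fun _ _ => sq_nonneg _) (Finset.mem_univ j)
    _ ≤ ∑ i', ∑ j', M i' j' ^ 2 :=
        Finset.single_le_sum (f := fun i' => ∑ j', M i' j' ^ 2)
          (fun _ _ => Finset.sum_nonneg fun _ _ => sq_nonneg _) (Finset.mem_univ i)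

lemma dist_row_le_frobNorm_sub {m n : ℕ} (M N : Matrix (Fin m) (Fin n) ℝ) (i : Fin m) :
    dist (M i) (N i) ≤ frobNorm (M - N) := by
  rw [dist_pi_le_iff (frobNorm_nonneg _)]
  intro j
  simpa [Real.dist_eq] using abs_apply_le_frobNorm (M - N) i j

lemma mul_row_mem_rowSpace {m d n : ℕ} (C : Matrix (Fin m) (Fin d) ℝ)
    (X : Matrix (Fin d) (Fin n) ℝ) (i : Fin m) : (C * X) i ∈ rowSpace X := by
  rw [Matrix.mul_apply_eq_vecMul, Matrix.vecMul_eq_sum]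
  exact Submodule.sum_mem _ fun k _ => Submodule.smul_mem _ _ (Submodule.subset_span ⟨k, rfl⟩)

lemma Esig_nonneg (σ : ℝ → ℝ) {din dout n : ℕ} (X : Matrix (Fin din) (Fin n) ℝ)
    (Y : Matrix (Fin dout) (Fin n) ℝ) (r : ℕ) : 0 ≤ Esig σ X Y r :=
  Real.iInf_nonneg fun _ => Real.iInf_nonneg fun _ => frobNorm_nonneg _

lemma Esig_le (σ : ℝ → ℝ) {din dout n : ℕ} (X : Matrix (Fin din) (Fin n) ℝ)
    (Y : Matrix (Fin dout) (Fin n) ℝ) {r : ℕ} (A : Matrix (Fin r) (Fin din) ℝ)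
    (B : Matrix (Fin dout) (Fin r) ℝ) :
    Esig σ X Y r ≤ frobNorm (Y - B * entrywise σ (A * X)) :=
  (ciInf_le ⟨0, Set.forall_mem_range.2 fun _ => Real.iInf_nonneg fun _ => frobNorm_nonneg _⟩
    A).trans (ciInf_le ⟨0, Set.forall_mem_range.2 fun _ => frobNorm_nonneg _⟩ B)

lemma le_Eid {din dout n : ℕ} (X : Matrix (Fin din) (Fin n) ℝ)
    (Y : Matrix (Fin dout) (Fin n) ℝ) {r : ℕ} {c : ℝ}
    (h : ∀ (A : Matrix (Fin r) (Fin din) ℝ) (B : Matrix (Fin dout) (Fin r) ℝ),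
      c ≤ frobNorm (Y - B * A * X)) : c ≤ Eid X Y r :=
  le_ciInf fun A => le_ciInf fun B => h A B

lemma Eid_pos_of_row_notMem_rowSpace {din dout n : ℕ} (X : Matrix (Fin din) (Fin n) ℝ)
    (Y : Matrix (Fin dout) (Fin n) ℝ) {i : Fin dout} (hi : Y i ∉ rowSpace X) (r : ℕ) :
    0 < Eid X Y r := by
  have hδ : 0 < Metric.infDist (Y i) (rowSpace X) :=
    ((rowSpace X).closed_of_finiteDimensional.notMem_iff_infDist_pos
      ⟨0, (rowSpace X).zero_mem⟩).mp hi
  refine hδ.trans_le (le_Eid X Y fun A B => ?_)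
  calc Metric.infDist (Y i) (rowSpace X) ≤ dist (Y i) ((B * A * X) i) :=
        Metric.infDist_le_dist_of_mem (mul_row_mem_rowSpace _ X i)
    _ ≤ frobNorm (Y - B * A * X) := dist_row_le_frobNorm_sub _ _ i

lemma Esig_eq_zero_of_rows_mem_span (σ : ℝ → ℝ) {din dout n : ℕ}
    (X : Matrix (Fin din) (Fin n) ℝ) (u : Fin din → ℝ) (Y : Matrix (Fin dout) (Fin n) ℝ)
    (hrows : ∀ i, Y i ∈ Submodule.span ℝ {fun j => σ (Matrix.vecMul u X j)})
    {r : ℕ} (hr : 0 < r) : Esig σ X Y r = 0 := by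
  choose c hc using fun i => Submodule.mem_span_singleton.mp (hrows i)
  let A : Matrix (Fin r) (Fin din) ℝ := Matrix.of fun _ => u
  let B : Matrix (Fin dout) (Fin r) ℝ := Matrix.of fun i k => if k = ⟨0, hr⟩ then c i else 0
  have hBA : B * entrywise σ (A * X) = Y := by
    ext i j
    simp [B, A, entrywise, Matrix.mul_apply, ← hc i, Matrix.vecMul, dotProduct]
  refine le_antisymm ?_ (Esig_nonneg σ X Y r)
  simpa [hBA, frobNorm] using Esig_le σ X Y A B

theorem stmt13_general {din dout n : ℕ} (X : Matrix (Fin din) (Fin n) ℝ)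
    (σ : ℝ → ℝ) (u : Fin din → ℝ) (v : Fin n → ℝ)
    (hv : v = fun j => σ (Matrix.vecMul u X j))
    (hvrow : v ∉ rowSpace X)
    (Y : Matrix (Fin dout) (Fin n) ℝ) (hYne : Y ≠ 0)
    (hrows : ∀ i, Y i ∈ Submodule.span ℝ {v}) :
    ∀ r : ℕ, 1 ≤ r → Esig σ X Y r = 0 ∧ 0 < Eid X Y r := by
  intro r hr
  refine ⟨Esig_eq_zero_of_rows_mem_span σ X u Y (hv ▸ hrows) hr, ?_⟩
  obtain ⟨i, hi⟩ : ∃ i, Y i ≠ 0 := by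
    by_contra! h
    exact hYne (funext h)
  obtain ⟨c, hc⟩ := Submodule.mem_span_singleton.mp (hrows i)
  have hc0 : c ≠ 0 := by
    rintro rfl
    exact hi (by rw [← hc, zero_smul])
  refine Eid_pos_of_row_notMem_rowSpace X Y (i := i) ?_ r
  rwa [← hc, Submodule.smul_mem_iff _ hc0]

/-- extreme case of Theorem 1: if `vᵀ := σ(uᵀX)` is nonzero with
`vᵀ ∉ row(X)`, and `Y ≠ 0` has all rows in `span{vᵀ}`, then `E_σ(r) = 0 < E_id(r)`
for every `r ≥ 1`. -/
theorem stmt13 {din dout n : ℕ} (X : Matrix (Fin din) (Fin n) ℝ)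
    (σ : ℝ → ℝ) (u : Fin din → ℝ) (v : Fin n → ℝ)
    (hv : v = fun j => σ (Matrix.vecMul u X j)) (hvne : v ≠ 0)
    (hvrow : v ∉ rowSpace X)
    (Y : Matrix (Fin dout) (Fin n) ℝ) (hYne : Y ≠ 0)
    (hrows : ∀ i, Y i ∈ Submodule.span ℝ {v}) :
    ∀ r : ℕ, 1 ≤ r → Esig σ X Y r = 0 ∧ 0 < Eid X Y r :=
  stmt13_general X σ u v hv hvrow Y hYne hrows

end

end CoLA
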